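/- Let t > 0 and x ≤ 0, set k₀ = √(−x/(12t)), and let ψ(k) = 2ikx + 8ik³t. Then for every r > 0: Re ψ(k₀ + r e^{iπ/4}) < 0 and Re ψ(k₀ + r e^{−iπ/4}) > 0. (Thus the ray of direction π/4 through the stationary point k₀ is a descent direction for Re ψ and the ray of direction −π/4 is an ascent direction.) -/
import Mathlib


open Complex

/-- The phase function `ψ(k) = 2ikx + 8ik³t` of the oscillatory Riemann–Hilbert
problem for the coupled mKdV equation (case `α = 1`). -/
noncomputable def psiPhase (x t : ℝ) (k : ℂ) : ℂ :=
  2 * Complex.I * k * (x : ℂ) + 8 * Complex.I * k ^ 3 * (t : ℂ)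

lemma exp_pi4 : Complex.exp (Complex.I * ((Real.pi : ℂ) / 4))
    = ((Real.sqrt 2 / 2 : ℝ) : ℂ) + ((Real.sqrt 2 / 2 : ℝ) : ℂ) * Complex.I := by
  rw [mul_comm, Complex.exp_mul_I]
  have h4 : ((Real.pi : ℂ) / 4) = ((Real.pi / 4 : ℝ) : ℂ) := by push_cast; ring
  rw [h4, ← Complex.ofReal_cos, ← Complex.ofReal_sin,
    Real.cos_pi_div_four, Real.sin_pi_div_four]

lemma exp_neg_pi4 : Complex.exp (-(Complex.I * ((Real.pi : ℂ) / 4)))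
    = ((Real.sqrt 2 / 2 : ℝ) : ℂ) - ((Real.sqrt 2 / 2 : ℝ) : ℂ) * Complex.I := by
  have : -(Complex.I * ((Real.pi : ℂ) / 4)) = ((-(Real.pi / 4) : ℝ) : ℂ) * Complex.I := by
    push_cast; ring
  rw [this, Complex.exp_mul_I, ← Complex.ofReal_cos, ← Complex.ofReal_sin,
    Real.cos_neg, Real.sin_neg, Real.cos_pi_div_four, Real.sin_pi_div_four]
  push_cast; ring

/-- for `t > 0`, `x ≤ 0`, `k₀ = √(−x/(12t))` and every `r > 0`,
`Re ψ(k₀ + r e^{iπ/4}) < 0` and `Re ψ(k₀ + r e^{−iπ/4}) > 0`. -/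
theorem stmt12 (x t : ℝ) (ht : 0 < t) (hx : x ≤ 0) (r : ℝ) (hr : 0 < r) :
    (psiPhase x t (((Real.sqrt (-x / (12 * t)) : ℝ) : ℂ)
        + (r : ℂ) * Complex.exp (Complex.I * ((Real.pi : ℂ) / 4)))).re < 0
    ∧ 0 < (psiPhase x t (((Real.sqrt (-x / (12 * t)) : ℝ) : ℂ)
        + (r : ℂ) * Complex.exp (-(Complex.I * ((Real.pi : ℂ) / 4))))).re := by
  set k₀ := Real.sqrt (-x / (12 * t)) with hk0
  have hk0nn : 0 ≤ k₀ := Real.sqrt_nonneg _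
  have hk0sq : k₀ ^ 2 = -x / (12 * t) := by
    rw [hk0, Real.sq_sqrt (div_nonneg (by linarith) (by linarith))]
  have hxeq : x = -(12 * t * k₀ ^ 2) := by
    field_simp at hk0sq
    linarith
  have hs2 : (Real.sqrt 2) ^ 2 = 2 := Real.sq_sqrt (by norm_num)
  have hs2pos : 0 < Real.sqrt 2 := Real.sqrt_pos.mpr (by norm_num)
  rw [exp_pi4, exp_neg_pi4]
  constructor
  · simp only [psiPhase, Complex.add_re, Complex.mul_re, Complex.mul_im,
      Complex.I_re, Complex.I_im, Complex.ofReal_re, Complex.ofReal_im,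
      Complex.add_im, pow_succ, pow_zero, one_mul, Complex.sub_re, Complex.sub_im,
      Complex.re_ofNat, Complex.im_ofNat]
    ring_nf
    have hx' : r * Real.sqrt 2 * x = -(k₀ ^ 2 * r * Real.sqrt 2 * t * 12) := by
      rw [hxeq]; ring
    have h3 : (Real.sqrt 2 : ℝ) ^ 3 = 2 * Real.sqrt 2 := by
      rw [pow_succ, hs2]
    rw [hs2, h3, hx']
    nlinarith [mul_nonneg (mul_nonneg hk0nn (sq_nonneg r)) ht.le,
      mul_pos (mul_pos (mul_pos hr hr) hr) (mul_pos hs2pos ht)]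
  · simp only [psiPhase, Complex.add_re, Complex.mul_re, Complex.mul_im,
      Complex.I_re, Complex.I_im, Complex.ofReal_re, Complex.ofReal_im,
      Complex.add_im, pow_succ, pow_zero, one_mul, Complex.sub_re, Complex.sub_im,
      Complex.re_ofNat, Complex.im_ofNat]
    ring_nf
    have hx' : r * Real.sqrt 2 * x = -(k₀ ^ 2 * r * Real.sqrt 2 * t * 12) := by
      rw [hxeq]; ring
    have h3 : (Real.sqrt 2 : ℝ) ^ 3 = 2 * Real.sqrt 2 := by
      rw [pow_succ, hs2]
    rw [hs2, h3, hx']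
    nlinarith [mul_nonneg (mul_nonneg hk0nn (sq_nonneg r)) ht.le,
      mul_pos (mul_pos (mul_pos hr hr) hr) (mul_pos hs2pos ht)]
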